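/- Let a_1, …, a_n and W be positive integers. Consider the {0,1}-action linear influence game on the players v_0, v_1, …, v_n, where the weight from v_0 to each v_i (1 ≤ i ≤ n) is 1, the weight from each v_i to v_0 is −a_i, all other weights are 0, the threshold of v_0 is −W, and the threshold of each v_i is 1. Then at every pure-strategy Nash equilibrium of this game, v_0 plays 1, and the number of pure-strategy Nash equilibria of this game equals the number of vectors x ∈ {0,1}^n with Σ_{i=1}^n a_i x_i ≤ W (the number of feasible 0-1 knapsack solutions). -/

import Mathlib

/-!
Each leaf's only influence is the center, against threshold 1, so every leaf copies the center's
action. If the center played 0, all leaves would play 0, and the center's influence 0 would exceed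
its threshold `-W < 0`, so it would rather play 1. Hence the center plays 1, and it is then
best-responding exactly when the leaves playing 1 have total weight `∑ aᵢ xᵢ ≤ W`: equilibria are
the feasible knapsack solutions, extended by 1 at the center.
-/

open Finset

/-- A pure-strategy Nash equilibrium of a `{0,1}`-action linear influence game. -/
def IsPSNE01 {P : Type*} [Fintype P] [DecidableEq P]
    (w : P → P → ℝ) (b : P → ℝ) (x : P → ℝ) : Prop :=
  (∀ p, x p = 0 ∨ x p = 1) ∧
    ∀ p, (2 * x p - 1) * ((∑ q ∈ univ.filter (· ≠ p), w q p * x q) - b p) ≥ 0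

/-- Weights of the star-shaped `{0,1}`-action LIG built from a knapsack instance:
the center `v₀` (encoded `none`) influences each leaf `vᵢ` (encoded `some i`) with
weight 1, and each leaf `vᵢ` influences the center with weight `-aᵢ`. -/
def knapsackW (n : ℕ) (a : Fin n → ℕ) : Option (Fin n) → Option (Fin n) → ℝ
  | none, some _ => 1
  | some i, none => -(a i : ℝ)
  | _, _ => 0

/-- Thresholds of the star-shaped `{0,1}`-action LIG built from a knapsack instance:
the center has threshold `-W`, and every leaf has threshold 1. -/
def knapsackB (n : ℕ) (W : ℕ) : Option (Fin n) → ℝ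
  | none => -(W : ℝ)
  | some _ => 1

lemma isPSNE01_iff {P : Type*} [Fintype P] [DecidableEq P] (w : P → P → ℝ) (b x : P → ℝ) :
    IsPSNE01 w b x ↔ ∀ p, (x p = 0 ∧ ∑ q ∈ univ.erase p, w q p * x q ≤ b p) ∨
      (x p = 1 ∧ b p ≤ ∑ q ∈ univ.erase p, w q p * x q) := by
  simp only [IsPSNE01, filter_ne', ← forall_and]
  refine forall_congr' fun p => ?_
  constructor
  · rintro ⟨hx | hx, h⟩ <;> rw [hx] at h
    · exact .inl ⟨hx, by linarith⟩
    · exact .inr ⟨hx, by linarith⟩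
  · rintro (⟨hx, h⟩ | ⟨hx, h⟩) <;> rw [hx]
    · exact ⟨.inl rfl, by linarith⟩
    · exact ⟨.inr rfl, by linarith⟩

section Knapsack

variable {n : ℕ} (a : Fin n → ℕ) (x : Option (Fin n) → ℝ)

lemma sum_knapsackW_leaf (i : Fin n) :
    ∑ q ∈ univ.erase (some i), knapsackW n a q (some i) * x q = x none := by
  rw [sum_erase _ (by simp [knapsackW]), Fintype.sum_option]
  simp [knapsackW]

lemma sum_knapsackW_center :
    ∑ q ∈ univ.erase none, knapsackW n a q none * x q = -∑ i, (a i : ℝ) * x (some i) := by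
  rw [sum_erase _ (by simp [knapsackW]), Fintype.sum_option]
  simp [knapsackW]

lemma isPSNE01_knapsack_iff {W : ℕ} (hW : 0 < W) :
    IsPSNE01 (knapsackW n a) (knapsackB n W) x ↔
      x none = 1 ∧ (∀ i, x (some i) = 0 ∨ x (some i) = 1) ∧
        ∑ i, (a i : ℝ) * x (some i) ≤ W := by
  simp only [isPSNE01_iff, Option.forall, sum_knapsackW_leaf, sum_knapsackW_center, knapsackB]
  constructor
  · rintro ⟨⟨hc, hle⟩ | ⟨hc, hle⟩, hleaf⟩
    · have hzero : ∀ i, x (some i) = 0 := fun i => by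
        rcases hleaf i with ⟨h, -⟩ | ⟨-, h⟩
        · exact h
        · linarith
      simp only [hzero, mul_zero, sum_const_zero] at hle
      exact absurd hle (by norm_num; exact hW.ne')
    · exact ⟨hc, fun i => (hleaf i).imp And.left And.left, by linarith⟩
  · rintro ⟨hc, h01, hle⟩
    refine ⟨.inr ⟨hc, by linarith⟩, fun i => ?_⟩
    rw [hc]
    exact (h01 i).imp (⟨·, le_rfl⟩) (⟨·, le_rfl⟩)

def isPSNE01KnapsackEquiv {W : ℕ} (hW : 0 < W) :
    {x : Option (Fin n) → ℝ // IsPSNE01 (knapsackW n a) (knapsackB n W) x} ≃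
      {y : Fin n → ℝ // (∀ i, y i = 0 ∨ y i = 1) ∧ ∑ i, (a i : ℝ) * y i ≤ W} where
  toFun x := ⟨fun i => x.1 (some i), ((isPSNE01_knapsack_iff a x.1 hW).mp x.2).2⟩
  invFun y := ⟨fun o => o.elim 1 y.1, (isPSNE01_knapsack_iff a _ hW).mpr ⟨rfl, y.2⟩⟩
  left_inv x := Subtype.ext <| funext fun o =>
    o.casesOn ((isPSNE01_knapsack_iff a x.1 hW).mp x.2).1.symm fun _ => rfl
  right_inv _ := rfl

end Knapsack

theorem knapsack_star_lig_general (n : ℕ) (a : Fin n → ℕ)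
    (W : ℕ) (hW : 0 < W) :
    (∀ x : Option (Fin n) → ℝ,
        IsPSNE01 (knapsackW n a) (knapsackB n W) x → x none = 1) ∧
    Nat.card {x : Option (Fin n) → ℝ // IsPSNE01 (knapsackW n a) (knapsackB n W) x}
      = Nat.card {x : Fin n → ℝ //
          (∀ i, x i = 0 ∨ x i = 1) ∧ (∑ i, (a i : ℝ) * x i) ≤ (W : ℝ)} := by
  exact ⟨fun x hx => ((isPSNE01_knapsack_iff a x hW).mp hx).1,
    Nat.card_congr (isPSNE01KnapsackEquiv a hW)⟩

/-- In the star LIG built from a knapsack instance, the center plays 1 at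
every PSNE, and the number of PSNE equals the number of feasible 0-1 knapsack solutions. -/
theorem knapsack_star_lig (n : ℕ) (a : Fin n → ℕ) (ha : ∀ i, 0 < a i)
    (W : ℕ) (hW : 0 < W) :
    (∀ x : Option (Fin n) → ℝ,
        IsPSNE01 (knapsackW n a) (knapsackB n W) x → x none = 1) ∧
    Nat.card {x : Option (Fin n) → ℝ // IsPSNE01 (knapsackW n a) (knapsackB n W) x}
      = Nat.card {x : Fin n → ℝ //
          (∀ i, x i = 0 ∨ x i = 1) ∧ (∑ i, (a i : ℝ) * x i) ≤ (W : ℝ)} :=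
  knapsack_star_lig_general n a W hW
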